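/- Suppose J₁ skew-symmetric, R₁ symmetric positive definite (both constant), J₁₂^T E invertible, and suppose x̄₁ satisfies ∇_{x₁}H(x̄₁, x₂*) = (I - E(J₁₂^T E)^{-1} J₁₂^T)(J₁-R₁)^{-1} d₁ with ∇_{x₂}H(x̄₁, x₂*) = 0. Then the point with gradient values (∇_{x₁}H_cl, ∇_{x₂}H_cl, ∇_ζ H_cl) = ((J₁-R₁)^{-1} d₁, 0, -(J₁₂^T E)^{-1} J₁₂^T (J₁-R₁)^{-1} d₁) is an equilibrium of the closed-loop vector field ẇ = F ∇H_cl(w) - (d₁, 0, 0), where F = [[J₁-R₁, J₁₂, 0], [-J₁₂^T, J₂-R₂, -J₁₂^T E], [0, E^T J₁₂, 0]]. -/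

import Mathlib

/-!
The first two equilibrium equations only need `(J₁ - R₁) (J₁ - R₁)⁻¹ = 1` and
`(J₁₂ᵀ E) (J₁₂ᵀ E)⁻¹ = 1`; the third holds because the middle gradient vanishes.
The one genuine point is that `J₁ - R₁` is invertible: if `(J₁ - R₁) x = 0`, then
`0 = xᵀ (J₁ - R₁) x = -xᵀ R₁ x`, since a skew form vanishes on the diagonal,
and positive definiteness of `R₁` forces `x = 0`.
-/

open Matrix

namespace Matrix

theorem dotProduct_mulVec_self_eq_zero_of_transpose_eq_neg {n R : Type*} [Fintype n]
    [CommRing R] [IsAddTorsionFree R] {J : Matrix n n R} (hJ : Jᵀ = -J) (x : n → R) :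
    x ⬝ᵥ J *ᵥ x = 0 := by
  have h : x ⬝ᵥ J *ᵥ x = x ⬝ᵥ Jᵀ *ᵥ x := (dotProduct_transpose_mulVec J x x).symm
  rwa [hJ, neg_mulVec, dotProduct_neg, self_eq_neg] at h

theorem isUnit_sub_of_transpose_eq_neg_of_posDef {n : Type*} [Fintype n] [DecidableEq n]
    {J R : Matrix n n ℝ} (hJ : Jᵀ = -J) (hR : R.PosDef) : IsUnit (J - R) := by
  rw [← mulVec_injective_iff_isUnit, ← (J - R).coe_mulVecLin, injective_iff_map_eq_zero]
  intro x hx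
  by_contra hx0
  have hform : x ⬝ᵥ (J - R) *ᵥ x = -(x ⬝ᵥ R *ᵥ x) := by
    rw [sub_mulVec, dotProduct_sub, dotProduct_mulVec_self_eq_zero_of_transpose_eq_neg hJ,
      zero_sub]
  have hpos : 0 < x ⬝ᵥ R *ᵥ x := by simpa using hR.dotProduct_mulVec_pos hx0
  rw [mulVecLin_apply] at hx
  rw [hx, dotProduct_zero] at hform
  linarith

theorem mulVec_nonsing_inv_mulVec {n R : Type*} [Fintype n] [DecidableEq n] [CommRing R]
    {A : Matrix n n R} (hA : IsUnit A) (v : n → R) : A *ᵥ A⁻¹ *ᵥ v = v := by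
  rw [mulVec_mulVec, mul_nonsing_inv A ((isUnit_iff_isUnit_det A).mp hA), one_mulVec]

end Matrix

theorem stmt_13_general {m p : ℕ} (J1 R1 : Matrix (Fin m) (Fin m) ℝ)
    (J2 R2 : Matrix (Fin p) (Fin p) ℝ) (J12 E : Matrix (Fin m) (Fin p) ℝ)
    (d1 : Fin m → ℝ)
    (hJ1 : J1ᵀ = -J1) (hR1 : R1.PosDef)
    (hInv : IsUnit (J12ᵀ * E))
    (g1 : Fin m → ℝ) (g2 g3 : Fin p → ℝ)
    (hg1 : g1 = (J1 - R1)⁻¹ *ᵥ d1) (hg2 : g2 = 0)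
    (hg3 : g3 = -(((J12ᵀ * E)⁻¹ * J12ᵀ * (J1 - R1)⁻¹) *ᵥ d1)) :
    (J1 - R1) *ᵥ g1 + J12 *ᵥ g2 - d1 = 0 ∧
    -(J12ᵀ *ᵥ g1) + (J2 - R2) *ᵥ g2 - (J12ᵀ * E) *ᵥ g3 = 0 ∧
    (Eᵀ * J12) *ᵥ g2 = 0 := by
  have hJR : IsUnit (J1 - R1) := isUnit_sub_of_transpose_eq_neg_of_posDef hJ1 hR1
  have hg3' : g3 = -((J12ᵀ * E)⁻¹ *ᵥ J12ᵀ *ᵥ g1) := by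
    rw [hg3, hg1, mulVec_mulVec, mulVec_mulVec, Matrix.mul_assoc]
  subst hg2
  refine ⟨?_, ?_, mulVec_zero _⟩
  · rw [hg1, mulVec_nonsing_inv_mulVec hJR, mulVec_zero, add_zero, sub_self]
  · rw [hg3', mulVec_neg, mulVec_nonsing_inv_mulVec hInv, mulVec_zero, add_zero, sub_neg_eq_add,
      neg_add_cancel]

theorem stmt_13 {m p : ℕ} (J1 R1 : Matrix (Fin m) (Fin m) ℝ)
    (J2 R2 : Matrix (Fin p) (Fin p) ℝ) (J12 E : Matrix (Fin m) (Fin p) ℝ)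
    (d1 : Fin m → ℝ)
    (hJ1 : J1ᵀ = -J1) (hR1 : R1.PosDef) (hJ2 : J2ᵀ = -J2) (hR2 : R2.PosSemidef)
    (hInv : IsUnit (J12ᵀ * E))
    (g1 : Fin m → ℝ) (g2 g3 : Fin p → ℝ)
    (hg1 : g1 = (J1 - R1)⁻¹ *ᵥ d1) (hg2 : g2 = 0)
    (hg3 : g3 = -(((J12ᵀ * E)⁻¹ * J12ᵀ * (J1 - R1)⁻¹) *ᵥ d1)) :
    (J1 - R1) *ᵥ g1 + J12 *ᵥ g2 - d1 = 0 ∧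
    -(J12ᵀ *ᵥ g1) + (J2 - R2) *ᵥ g2 - (J12ᵀ * E) *ᵥ g3 = 0 ∧
    (Eᵀ * J12) *ᵥ g2 = 0 :=
  stmt_13_general J1 R1 J2 R2 J12 E d1 hJ1 hR1 hInv g1 g2 g3 hg1 hg2 hg3
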